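/- Let f_1,...,f_k be maps of a compact metric space X. An IFS is weakly hyperbolic if diam(f_{ω_1} ∘ ... ∘ f_{ω_n}(X)) → 0 for every sequence ω. If an IFS is weakly hyperbolic and minimal, then it is strongly-fibred: for every nonempty open set U ⊆ X there is ω ∈ {1,...,k}^N with ⋂_{n≥1} f_{ω_1} ∘ ... ∘ f_{ω_n}(X) ⊆ U. -/

import Mathlib

open Set Filter

/-- `hatComp f ω n = f_{ω_1} ∘ ... ∘ f_{ω_n}` (compositions in fibred order). -/
def hatComp {X : Type*} {k : ℕ} (f : Fin k → X → X) (ω : ℕ → Fin k) : ℕ → X → X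
  | 0 => id
  | n + 1 => fun x => hatComp f ω n (f (ω n) x)

/-- Composition of the generators along a finite word. -/
def listComp {X : Type*} {k : ℕ} (f : Fin k → X → X) (l : List (Fin k)) : X → X :=
  fun x => l.foldl (fun y i => f i y) x

/-!
Weak hyperbolicity is automatically uniform: the sets `{ω | diam (f̂_ω^n X) < ε}` increase with
`n`, are open in the compact space `{1,…,k}^ℕ` because they depend only on `ω_1, …, ω_n`, and
cover it, so one of them is everything. Fix `N` with `diam (f̂_ω^N X) < r/2` for all `ω`, where
`B(x₀, r) ⊆ U`. Minimality, applied at the image of `x₀` under any word of length `N`, yields a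
word of length `n > N` sending `x₀` into `B(x₀, r/2)`; reading it backwards gives `ω` with
`f̂_ω^n X ⊆ f̂_ω^N X` meeting `B(x₀, r/2)`, so `X_ω ⊆ f̂_ω^n X ⊆ B(x₀, r) ⊆ U`.
-/

open Topology

lemma List.exists_map_range_eq {α : Type*} (l : List α) (hl : l ≠ []) :
    ∃ ω : ℕ → α, (List.range l.length).map ω = l := by
  refine ⟨fun i => l.getD i (l.head hl), List.ext_getElem (by simp) fun i _ hi => ?_⟩
  simp [List.getElem?_eq_getElem hi]

namespace IFS

variable {X : Type*} {k : ℕ} (f : Fin k → X → X)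

lemma listComp_append (l₁ l₂ : List (Fin k)) :
    listComp f (l₁ ++ l₂) = listComp f l₂ ∘ listComp f l₁ :=
  funext fun _ => List.foldl_append

lemma hatComp_eq_listComp (ω : ℕ → Fin k) (n : ℕ) :
    hatComp f ω n = listComp f ((List.range n).map ω).reverse := by
  induction n with
  | zero => rfl
  | succ n ih =>
    funext x
    simp [hatComp, ih, listComp, List.range_succ]

lemma exists_hatComp_eq_listComp (l : List (Fin k)) (hl : l ≠ []) :
    ∃ ω, hatComp f ω l.length = listComp f l := by
  obtain ⟨ω, hω⟩ := List.exists_map_range_eq l.reverse (List.reverse_ne_nil_iff.2 hl)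
  refine ⟨ω, ?_⟩
  rw [hatComp_eq_listComp, ← List.length_reverse, hω, List.reverse_reverse]

lemma hatComp_image_antitone (ω : ℕ → Fin k) :
    Antitone fun n => hatComp f ω n '' univ := by
  refine antitone_nat_of_succ_le fun n => ?_
  rintro _ ⟨x, -, rfl⟩
  exact ⟨f (ω n) x, mem_univ _, rfl⟩

lemma eventually_hatComp_eq (ω : ℕ → Fin k) (n : ℕ) :
    ∀ᶠ ω' in 𝓝 ω, hatComp f ω' n = hatComp f ω n := by
  induction n with
  | zero => exact Eventually.of_forall fun _ => rfl
  | succ n ih =>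
    have h_letter : ∀ᶠ ω' in 𝓝 ω, ω' n = ω n :=
      tendsto_pure.1 (by simpa only [nhds_discrete] using (continuous_apply n).tendsto ω)
    filter_upwards [ih, h_letter] with ω' h_prefix h_last
    simp only [hatComp, h_prefix, h_last]

lemma isOpen_setOf_hatComp (P : (X → X) → Prop) (n : ℕ) :
    IsOpen {ω | P (hatComp f ω n)} :=
  isOpen_iff_mem_nhds.2 fun ω hω =>
    (eventually_hatComp_eq f ω n).mono fun _ h => show P _ from h ▸ hω

lemma exists_forall_diam_hatComp_lt [MetricSpace X] [CompactSpace X]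
    (hwh : ∀ ω : ℕ → Fin k,
      Tendsto (fun n : ℕ => Metric.diam (hatComp f ω n '' univ)) atTop (𝓝 0))
    {ε : ℝ} (hε : 0 < ε) :
    ∃ N, ∀ ω, Metric.diam (hatComp f ω N '' univ) < ε := by
  set small : ℕ → Set (ℕ → Fin k) := fun n => {ω | Metric.diam (hatComp f ω n '' univ) < ε}
  have h_open : ∀ n, IsOpen (small n) :=
    isOpen_setOf_hatComp f (fun g => Metric.diam (g '' univ) < ε)
  have h_mono : Monotone small := fun m n hmn ω hω =>
    (Metric.diam_mono (hatComp_image_antitone f ω hmn) Metric.isBounded_of_compactSpace).trans_lt hω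
  have h_cover : univ ⊆ ⋃ n, small n := fun ω _ =>
    mem_iUnion.2 ((hwh ω).eventually (gt_mem_nhds hε)).exists
  obtain ⟨N, hN⟩ := isCompact_univ.elim_directed_cover small h_open h_cover h_mono.directed_le
  exact ⟨N, fun ω => hN (mem_univ ω)⟩

lemma exists_hatComp_mem_of_minimal [TopologicalSpace X]
    (hmin : ∀ x : X, Dense {y : X | ∃ l : List (Fin k), l ≠ [] ∧ y = listComp f l x})
    {V : Set X} (hV : IsOpen V) (hVne : V.Nonempty) (N : ℕ) :
    ∃ ω n x, N < n ∧ hatComp f ω n x ∈ V := by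
  obtain ⟨x₀, hx₀⟩ := hVne
  have : Nonempty X := ⟨x₀⟩
  obtain ⟨-, l₀, hl₀, -⟩ := (hmin x₀).nonempty
  set w := List.replicate N (l₀.head hl₀)
  obtain ⟨-, ⟨l, hl, rfl⟩, hlV⟩ := (hmin (listComp f w x₀)).exists_mem_open hV ⟨x₀, hx₀⟩
  obtain ⟨ω, hω⟩ := exists_hatComp_eq_listComp f (w ++ l) (by simp [hl])
  refine ⟨ω, (w ++ l).length, x₀, ?_, ?_⟩
  · simpa [w] using List.length_pos_iff.2 hl
  · rwa [hω, listComp_append]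

end IFS

open IFS in
theorem weakly_hyperbolic_minimal_implies_strongly_fibred_general
    {X : Type*} [MetricSpace X] [CompactSpace X] {k : ℕ}
    (f : Fin k → X → X)
    -- weak hyperbolicity
    (hwh : ∀ ω : ℕ → Fin k,
      Tendsto (fun n : ℕ => Metric.diam (hatComp f ω n '' Set.univ)) atTop (nhds 0))
    -- minimality of the IFS
    (hmin : ∀ x : X, Dense {y : X | ∃ l : List (Fin k), l ≠ [] ∧ y = listComp f l x}) :
    ∀ U : Set X, IsOpen U → U.Nonempty →
      ∃ ω : ℕ → Fin k, (⋂ n ≥ 1, hatComp f ω n '' Set.univ) ⊆ U := by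
  rintro U hU ⟨x₀, hx₀⟩
  obtain ⟨r, hr, hball⟩ := Metric.isOpen_iff.1 hU x₀ hx₀
  obtain ⟨N, hN⟩ := exists_forall_diam_hatComp_lt f hwh (half_pos hr)
  obtain ⟨ω, n, x, hNn, hx⟩ := exists_hatComp_mem_of_minimal f hmin Metric.isOpen_ball
    ⟨x₀, Metric.mem_ball_self (half_pos hr)⟩ N
  have h_sub : hatComp f ω n '' univ ⊆ hatComp f ω N '' univ :=
    hatComp_image_antitone f ω hNn.le
  refine ⟨ω, fun y hy => hball ?_⟩
  have hyn : y ∈ hatComp f ω n '' univ := mem_iInter₂.1 hy n (by omega)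
  calc dist y x₀ ≤ dist y (hatComp f ω n x) + dist (hatComp f ω n x) x₀ := dist_triangle _ _ _
    _ < r / 2 + r / 2 := add_lt_add_of_le_of_lt ((Metric.dist_le_diam_of_mem
        Metric.isBounded_of_compactSpace (h_sub hyn) (h_sub (mem_image_of_mem _ trivial))).trans
        (hN ω).le) hx
    _ = r := add_halves r

theorem weakly_hyperbolic_minimal_implies_strongly_fibred
    {X : Type*} [MetricSpace X] [CompactSpace X] {k : ℕ}
    (f : Fin k → X → X) (hf : ∀ i, Continuous (f i))
    -- weak hyperbolicity
    (hwh : ∀ ω : ℕ → Fin k,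
      Tendsto (fun n : ℕ => Metric.diam (hatComp f ω n '' Set.univ)) atTop (nhds 0))
    -- minimality of the IFS
    (hmin : ∀ x : X, Dense {y : X | ∃ l : List (Fin k), l ≠ [] ∧ y = listComp f l x}) :
    ∀ U : Set X, IsOpen U → U.Nonempty →
      ∃ ω : ℕ → Fin k, (⋂ n ≥ 1, hatComp f ω n '' Set.univ) ⊆ U :=
  weakly_hyperbolic_minimal_implies_strongly_fibred_general f hwh hmin
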